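/- arXiv:2011.07381 — 4 statements merged into one kernel-verified Lean document; each statement's English description precedes it below -/
import Mathlib

section
/- Let $M_1, \ldots, M_n$ be rank-one $C_2^k$-lattices (each $M_i \cong \mathbb{Z}$ with action given by a character $\rho_i: C_2^k \to \{\pm 1\}$), set $N = M_1 \oplus \cdots \oplus M_n$, and let $f: N \to M$ be a $C_2^k$-module homomorphism into a $C_2^k$-module $M$ whose underlying group is free abelian. Let $e_i$ generate $M_i$. Suppose for some $i$ there exist a nonzero integer $b$, an integer $t \geq 2$, indices $i_1, \ldots, i_t$, nonzero integers $a_{i_1}, \ldots, a_{i_t}$, and a linearly independent family $f(e_{i_1}), \ldots, f(e_{i_t})$ with $b f(e_i) = a_{i_1} f(e_{i_1}) + \cdots + a_{i_t} f(e_{i_t})$. Then $\ker(\rho_{i_1}) = \cdots = \ker(\rho_{i_t})$. -/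
/-!
Each basis vector `eᵢ` of `N` is an eigenvector of every `g`, with eigenvalue `ρᵢ g`, and `f`
carries this over to `f eᵢ`. Applying `g` to `b f(eᵢ) = Σ a_z f(e_{i_z})` and comparing with the
relation multiplied by `ρᵢ g`, linear independence gives `a_z ρ_{i_z} g = a_z ρᵢ g`, so every
`ρ_{i_z}` equals `ρᵢ`.
-/

open Finset

theorem LinearIndependent.eigenvalue_eq_of_smul_eq_sum {R M ι : Type*} [CommRing R]
    [NoZeroDivisors R] [AddCommGroup M] [Module R M] [Fintype ι] {v : ι → M}
    (hv : LinearIndependent R v) {T : M →ₗ[R] M} {c : ι → R} {c₀ : R} {w : M}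
    (hTv : ∀ z, T (v z) = c z • v z) (hTw : T w = c₀ • w) {b : R} {a : ι → R}
    (ha : ∀ z, a z ≠ 0) (hrel : b • w = ∑ z, a z • v z) (z : ι) :
    c z = c₀ := by
  have hT : ∑ z, (a z * c z) • v z = ∑ z, (c₀ * a z) • v z := by
    calc ∑ z, (a z * c z) • v z = T (b • w) := by
          rw [hrel, map_sum]; simp only [map_smul, hTv, mul_smul]
      _ = c₀ • (b • w) := by rw [map_smul, hTw, smul_comm]
      _ = ∑ z, (c₀ * a z) • v z := by simp only [hrel, smul_sum, mul_smul]
  have hcoeff : a z * c z - c₀ * a z = 0 :=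
    Fintype.linearIndependent_iff.mp hv (fun z => a z * c z - c₀ * a z)
      (by simp only [sub_smul, sum_sub_distrib, hT, sub_self]) z
  exact mul_left_cancel₀ (ha z) (by rw [sub_eq_zero] at hcoeff; rw [hcoeff, mul_comm])

theorem map_single_eigenvector {R G M : Type*} [CommRing R] [Monoid G] [AddCommGroup M]
    [Module R M] {n : ℕ} (ρ : Fin n → G →* Rˣ) (σ : G →* (M ≃ₗ[R] M)) (f : (Fin n → R) →ₗ[R] M)
    (hf : ∀ g v, f (fun j => (ρ j g : R) * v j) = σ g (f v)) (g : G) (c : Fin n) :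
    σ g (f (Pi.single c 1)) = (ρ c g : R) • f (Pi.single c 1) := by
  have hsingle : (fun j => (ρ j g : R) * (Pi.single c 1 : Fin n → R) j)
      = (ρ c g : R) • Pi.single c 1 := by
    ext j
    rcases eq_or_ne j c with rfl | h <;> simp [*]
  rw [← hf, hsingle, map_smul]

theorem stmt7_general (k n : ℕ) (ρ : Fin n → (Multiplicative (Fin k → ZMod 2) →* ℤˣ))
    (M : Type*) [AddCommGroup M] [Module ℤ M]
    (σ : Multiplicative (Fin k → ZMod 2) →* (M ≃ₗ[ℤ] M))
    (f : (Fin n → ℤ) →ₗ[ℤ] M)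
    (hf : ∀ (g : Multiplicative (Fin k → ZMod 2)) (v : Fin n → ℤ),
      f (fun j => (ρ j g : ℤ) * v j) = σ g (f v))
    (i : Fin n) (b : ℤ) (t : ℕ)
    (ι : Fin t → Fin n) (a : Fin t → ℤ) (ha : ∀ z, a z ≠ 0)
    (hli : LinearIndependent ℤ (fun z : Fin t => f (Pi.single (ι z) 1)))
    (hrel : b • f (Pi.single i 1) = ∑ z : Fin t, a z • f (Pi.single (ι z) 1)) :
    ∀ z w : Fin t, (ρ (ι z)).ker = (ρ (ι w)).ker := by
  -- `hrel` uses the `zsmul` action, the linear maps use the given `Module ℤ M`; they agree.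
  obtain rfl : ‹Module ℤ M› = AddCommGroup.toIntModule M := Subsingleton.elim _ _
  have hρ : ∀ z, ρ (ι z) = ρ i := fun z => MonoidHom.ext fun g => Units.ext <|
    hli.eigenvalue_eq_of_smul_eq_sum (T := (σ g).toLinearMap)
      (fun z => map_single_eigenvector ρ σ f hf g (ι z))
      (map_single_eigenvector ρ σ f hf g i) ha hrel z
  intro z w
  rw [hρ z, hρ w]

/-- Let `N = M₁ ⊕ ⋯ ⊕ Mₙ` be a sum of rank-one `C₂ᵏ`-lattices with
characters `ρᵢ`, and let `f : N → M` be a `C₂ᵏ`-equivariant homomorphism into a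
`C₂ᵏ`-module whose underlying group is free abelian.  If for some `i` there are
`b ≠ 0`, `t ≥ 2`, indices `ι`, nonzero integers `a_z`, and a linearly independent
family `f(e_{ι z})` with `b f(eᵢ) = Σ a_z f(e_{ι z})`, then all the kernels
`ker ρ_{ι z}` coincide. -/
theorem stmt7 (k n : ℕ) (ρ : Fin n → (Multiplicative (Fin k → ZMod 2) →* ℤˣ))
    (M : Type*) [AddCommGroup M] [Module ℤ M] [Module.Free ℤ M]
    (σ : Multiplicative (Fin k → ZMod 2) →* (M ≃ₗ[ℤ] M))
    (f : (Fin n → ℤ) →ₗ[ℤ] M)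
    (hf : ∀ (g : Multiplicative (Fin k → ZMod 2)) (v : Fin n → ℤ),
      f (fun j => (ρ j g : ℤ) * v j) = σ g (f v))
    (i : Fin n) (b : ℤ) (hb : b ≠ 0) (t : ℕ) (ht : 2 ≤ t)
    (ι : Fin t → Fin n) (a : Fin t → ℤ) (ha : ∀ z, a z ≠ 0)
    (hli : LinearIndependent ℤ (fun z : Fin t => f (Pi.single (ι z) 1)))
    (hrel : b • f (Pi.single i 1) = ∑ z : Fin t, a z • f (Pi.single (ι z) 1)) :
    ∀ z w : Fin t, (ρ (ι z)).ker = (ρ (ι w)).ker :=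
  stmt7_general k n ρ M σ f hf i b t ι a ha hli hrel
end

section
/- The group $\Delta_P = \langle x, y \mid x^{-1} y^2 x y^2 = 1,\ y^{-1} x^2 y x^2 = 1 \rangle$ (the Promislow/Hantzsche-Wendt group) is torsion-free. -/
/-!
The affine maps `v ↦ (v₁ + ½, ½ - v₂, -v₃)` and `v ↦ (-v₁, v₂ + ½, ½ - v₃)` of `ℚ³` satisfy the
defining relations, so they give a representation of `Δ_P` by affine maps. Inside `Δ_P`, the
squares `x², y², (xy)²` commute pairwise and each is fixed or inverted by conjugation with `x` and
`y`; so they generate a normal subgroup whose quotient is generated by two commuting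
involutions, and every element is `w · (x²)ⁱ (y²)ʲ ((xy)²)ᵏ` with `w ∈ {1, x, y, xy}`. In the
representation the square of such an element is a translation, by `(2i, 2j, -2k)` if `w = 1` and
otherwise by a vector with an odd coordinate `2i + 1`, `2j + 1` or `-(2k + 1)`. It is nonzero
unless the element is `1`, and a nonzero translation of `ℚ³` has infinite order.
-/

/-- The defining relations of the Promislow (Hantzsche–Wendt) group
`Δ_P = ⟨x, y ∣ x⁻¹y²xy² = 1, y⁻¹x²yx² = 1⟩`. -/
def deltaPRels : Set (FreeGroup (Fin 2)) :=
  {(FreeGroup.of 0)⁻¹ * (FreeGroup.of 1) ^ 2 * FreeGroup.of 0 * (FreeGroup.of 1) ^ 2,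
   (FreeGroup.of 1)⁻¹ * (FreeGroup.of 0) ^ 2 * FreeGroup.of 1 * (FreeGroup.of 0) ^ 2}

/-- `Monoid.IsTorsionFree` as it stood in the older Mathlib (removed since):
no non-identity element has finite order. -/
def Monoid.IsTorsionFree (G : Type*) [Monoid G] : Prop :=
  ∀ g : G, g ≠ 1 → ¬IsOfFinOrder g

section ConjInverting

variable {G : Type*} [Group G] {g u : G}

theorem mul_mul_inv_eq_inv_iff_inv_mul_mul_eq_inv :
    g * u * g⁻¹ = u⁻¹ ↔ g⁻¹ * u * g = u⁻¹ := by
  have key : ∀ g : G, g * u * g⁻¹ = u⁻¹ → g⁻¹ * u * g = u⁻¹ := fun g h =>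
    calc g⁻¹ * u * g = g⁻¹ * (u⁻¹)⁻¹ * g := by rw [inv_inv]
      _ = g⁻¹ * (g * u * g⁻¹)⁻¹ * g := by rw [h]
      _ = u⁻¹ := by group
  exact ⟨key g, fun h => by simpa using key g⁻¹ (by simpa using h)⟩

theorem commute_sq_of_mul_mul_inv_eq_inv (h : g * u * g⁻¹ = u⁻¹) : Commute (g ^ 2) u :=
  calc g ^ 2 * u = g * (g * u * g⁻¹) * g⁻¹ * g ^ 2 := by simp only [sq]; group
    _ = g * u⁻¹ * g⁻¹ * g ^ 2 := by rw [h]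
    _ = (g * u * g⁻¹)⁻¹ * g ^ 2 := by group
    _ = u * g ^ 2 := by rw [h, inv_inv]

end ConjInverting

namespace Subgroup

variable {G : Type*} [Group G]

theorem normal_closure_of_conj_eq_or_eq_inv {S T : Set G} (hT : closure T = ⊤)
    (h : ∀ t ∈ T, ∀ s ∈ S, t * s * t⁻¹ = s ∨ t * s * t⁻¹ = s⁻¹) : (closure S).Normal := by
  have conj_mem : ∀ t : G, (∀ s ∈ S, t * s * t⁻¹ = s ∨ t * s * t⁻¹ = s⁻¹) →
      ∀ n ∈ closure S, t * n * t⁻¹ ∈ closure S := fun t ht n hn =>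
    (closure_le (K := (closure S).comap (MulAut.conj t).toMonoidHom)).2
      (fun s hs => by
        rcases ht s hs with e | e <;> simp only [SetLike.mem_coe, mem_comap,
          MulEquiv.coe_toMonoidHom, MulAut.conj_apply, e]
        exacts [subset_closure hs, inv_mem (subset_closure hs)]) hn
  rw [← normalizer_eq_top_iff, eq_top_iff, ← hT, closure_le]
  intro t ht n
  constructor
  · exact conj_mem t (h t ht) n
  · intro hn
    have ht' : ∀ s ∈ S, t⁻¹ * s * t⁻¹⁻¹ = s ∨ t⁻¹ * s * t⁻¹⁻¹ = s⁻¹ := fun s hs => by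
      rw [inv_inv]
      refine (h t ht s hs).imp (fun e => ?_) mul_mul_inv_eq_inv_iff_inv_mul_mul_eq_inv.mp
      calc t⁻¹ * s * t = t⁻¹ * (t * s * t⁻¹) * t := by rw [e]
        _ = s := by group
    simpa [mul_assoc] using conj_mem t⁻¹ ht' _ hn

variable {P Q R : G}

theorem mem_closure_triple (hPQ : Commute P Q) (hPR : Commute P R) (hQR : Commute Q R) {g : G} :
    g ∈ closure {P, Q, R} ↔ ∃ i j k : ℤ, P ^ i * Q ^ j * R ^ k = g := by
  have mul_eq : ∀ i j k i' j' k' : ℤ, (P ^ i * Q ^ j * R ^ k) * (P ^ i' * Q ^ j' * R ^ k') =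
      P ^ (i + i') * Q ^ (j + j') * R ^ (k + k') := fun i j k i' j' k' => by
    have hRP := (hPR.symm.zpow_zpow k i').eq
    have hQP := (hPQ.symm.zpow_zpow j i').eq
    have hRQ := (hQR.symm.zpow_zpow k j').eq
    simp only [zpow_add, mul_assoc]
    rw [← mul_assoc (R ^ k), hRP, mul_assoc, ← mul_assoc (Q ^ j), hQP, mul_assoc,
      ← mul_assoc (R ^ k) (Q ^ j'), hRQ, mul_assoc]
  constructor
  · intro hg
    induction hg using closure_induction with
    | mem s hs =>
      rcases hs with rfl | rfl | rfl
      exacts [⟨1, 0, 0, by simp⟩, ⟨0, 1, 0, by simp⟩, ⟨0, 0, 1, by simp⟩]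
    | one => exact ⟨0, 0, 0, by simp⟩
    | mul a b _ _ ha hb =>
      obtain ⟨i, j, k, rfl⟩ := ha
      obtain ⟨i', j', k', rfl⟩ := hb
      exact ⟨_, _, _, (mul_eq ..).symm⟩
    | inv a _ ha =>
      obtain ⟨i, j, k, rfl⟩ := ha
      refine ⟨-i, -j, -k, (inv_eq_of_mul_eq_one_right ?_).symm⟩
      rw [mul_eq]
      simp
  · rintro ⟨i, j, k, rfl⟩
    have mem : ∀ s ∈ ({P, Q, R} : Set G), s ∈ closure {P, Q, R} := fun s hs => subset_closure hs
    exact mul_mem (mul_mem (zpow_mem (mem P (by simp)) i) (zpow_mem (mem Q (by simp)) j))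
      (zpow_mem (mem R (by simp)) k)

end Subgroup

theorem mem_of_mem_closure_pair_of_sq_eq_one {K : Type*} [Group K] {a b : K} (ha : a ^ 2 = 1)
    (hb : b ^ 2 = 1) (hab : (a * b) ^ 2 = 1) {q : K} (hq : q ∈ Subgroup.closure {a, b}) :
    q ∈ ({1, a, b, a * b} : Set K) := by
  have inv_eq : ∀ c : K, c ^ 2 = 1 → c⁻¹ = c := fun c hc =>
    inv_eq_of_mul_eq_one_right (by rwa [← sq])
  have hba : b * a = a * b :=
    calc b * a = b⁻¹ * a⁻¹ := by rw [inv_eq b hb, inv_eq a ha]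
      _ = a * b := by rw [← mul_inv_rev, inv_eq _ hab]
  have ha' : a * a = 1 := by rw [← sq, ha]
  have hb' : b * b = 1 := by rw [← sq, hb]
  have hb'' : ∀ c, c * b * b = c := fun c => by rw [mul_assoc, hb', mul_one]
  have mul_mem : ∀ t ∈ ({a, b} : Set K), ∀ r ∈ ({1, a, b, a * b} : Set K),
      t * r ∈ ({1, a, b, a * b} : Set K) := by
    rintro t (rfl | rfl) r (rfl | rfl | rfl | rfl) <;>
      simp [← mul_assoc, ha', hb', hb'', hba]
  induction hq using Subgroup.closure_induction_left with
  | one => simp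
  | mul_left t ht r _ hr => exact mul_mem t ht r hr
  | inv_mul_cancel t ht r _ hr =>
    rcases ht with rfl | rfl
    · rw [inv_eq _ ha]; exact mul_mem _ (by simp) r hr
    · rw [inv_eq _ hb]; exact mul_mem _ (by simp) r hr

section PromislowRelations

variable {G : Type*} [Group G] {x y : G}
  (hx : x⁻¹ * y ^ 2 * x = (y ^ 2)⁻¹) (hy : y⁻¹ * x ^ 2 * y = (x ^ 2)⁻¹)
include hx hy

theorem conj_sq_mul_eq_inv_left : x * (x * y) ^ 2 * x⁻¹ = ((x * y) ^ 2)⁻¹ :=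
  calc x * (x * y) ^ 2 * x⁻¹ = y * (y⁻¹ * x ^ 2 * y) * x * y * x⁻¹ := by simp only [sq]; group
    _ = y⁻¹ * x⁻¹ * (x * y ^ 2 * x⁻¹) * y * x⁻¹ := by rw [hy]; simp only [sq]; group
    _ = ((x * y) ^ 2)⁻¹ := by
      rw [mul_mul_inv_eq_inv_iff_inv_mul_mul_eq_inv.mpr hx]; simp only [sq]; group

theorem conj_sq_mul_eq_inv_right : y * (x * y) ^ 2 * y⁻¹ = ((x * y) ^ 2)⁻¹ :=
  calc y * (x * y) ^ 2 * y⁻¹ = y⁻¹ * x * (x⁻¹ * y ^ 2 * x) * y * x := by simp only [sq]; group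
    _ = y⁻¹ * x⁻¹ * y⁻¹ * (y * x ^ 2 * y⁻¹) * x := by rw [hx]; simp only [sq]; group
    _ = ((x * y) ^ 2)⁻¹ := by
      rw [mul_mul_inv_eq_inv_iff_inv_mul_mul_eq_inv.mpr hy]; simp only [sq]; group

end PromislowRelations

theorem Equiv.not_isOfFinOrder_addLeft {V : Type*} [AddGroup V] [IsAddTorsionFree V] {t : V}
    (ht : t ≠ 0) : ¬IsOfFinOrder (Equiv.addLeft t) := by
  intro h
  obtain ⟨n, hn, hpow⟩ := h.exists_pow_eq_one
  refine not_isOfFinAddOrder_of_isAddTorsionFree ht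
    (isOfFinAddOrder_iff_nsmul_eq_zero.mpr ⟨n, hn, ?_⟩)
  simpa using congr($hpow 0)

namespace DeltaP

local notation "Δ" => PresentedGroup deltaPRels

def x : Δ := PresentedGroup.of 0

def y : Δ := PresentedGroup.of 1

theorem closure_x_y : Subgroup.closure {x, y} = ⊤ := by
  rw [← PresentedGroup.closure_range_of]
  congr
  ext g
  simp [Fin.exists_fin_two, x, y, eq_comm]

theorem x_rel : x⁻¹ * y ^ 2 * x = (y ^ 2)⁻¹ := by
  rw [← mul_eq_one_iff_eq_inv]
  have h := PresentedGroup.one_of_mem (rels := deltaPRels) (Set.mem_insert _ _)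
  simp only [map_mul, map_inv, map_pow] at h
  exact h

theorem y_rel : y⁻¹ * x ^ 2 * y = (x ^ 2)⁻¹ := by
  rw [← mul_eq_one_iff_eq_inv]
  have h := PresentedGroup.one_of_mem (rels := deltaPRels) (Set.mem_insert_of_mem _ rfl)
  simp only [map_mul, map_inv, map_pow] at h
  exact h

def translations : Subgroup Δ := Subgroup.closure {x ^ 2, y ^ 2, (x * y) ^ 2}

instance translations_normal : translations.Normal := by
  refine Subgroup.normal_closure_of_conj_eq_or_eq_inv closure_x_y ?_
  rintro t (rfl | rfl) s (rfl | rfl | rfl)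
  · exact .inl (by simp only [sq]; group)
  · exact .inr (mul_mul_inv_eq_inv_iff_inv_mul_mul_eq_inv.mpr x_rel)
  · exact .inr (conj_sq_mul_eq_inv_left x_rel y_rel)
  · exact .inr (mul_mul_inv_eq_inv_iff_inv_mul_mul_eq_inv.mpr y_rel)
  · exact .inl (by simp only [sq]; group)
  · exact .inr (conj_sq_mul_eq_inv_right x_rel y_rel)

theorem mem_translations_iff {g : Δ} :
    g ∈ translations ↔ ∃ i j k : ℤ, (x ^ 2) ^ i * (y ^ 2) ^ j * ((x * y) ^ 2) ^ k = g :=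
  Subgroup.mem_closure_triple
    (commute_sq_of_mul_mul_inv_eq_inv (mul_mul_inv_eq_inv_iff_inv_mul_mul_eq_inv.mpr x_rel))
    (commute_sq_of_mul_mul_inv_eq_inv (conj_sq_mul_eq_inv_left x_rel y_rel))
    (commute_sq_of_mul_mul_inv_eq_inv (conj_sq_mul_eq_inv_right x_rel y_rel))

theorem exists_inv_mul_mem_translations (g : Δ) :
    ∃ w ∈ ({1, x, y, x * y} : Set Δ), w⁻¹ * g ∈ translations := by
  let π := QuotientGroup.mk' translations
  have sq_mem : ∀ s : Δ, s ^ 2 ∈ translations → π s ^ 2 = 1 := fun s hs => by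
    rwa [← map_pow, QuotientGroup.mk'_apply, QuotientGroup.eq_one_iff]
  have hg : π g ∈ Subgroup.closure {π x, π y} := by
    rw [← Set.image_pair, ← MonoidHom.map_closure, closure_x_y]
    exact ⟨g, Subgroup.mem_top g, rfl⟩
  have hπg := mem_of_mem_closure_pair_of_sq_eq_one
    (sq_mem x (Subgroup.subset_closure (by simp))) (sq_mem y (Subgroup.subset_closure (by simp)))
    (by rw [← map_mul]; exact sq_mem _ (Subgroup.subset_closure (by simp))) hg
  obtain ⟨w, hw, hwg⟩ : ∃ w ∈ ({1, x, y, x * y} : Set Δ), π w = π g := by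
    simpa [eq_comm (b := π g)] using hπg
  exact ⟨w, hw, QuotientGroup.eq.mp hwg⟩

theorem exists_eq_mul_zpow (g : Δ) : ∃ w ∈ ({1, x, y, x * y} : Set Δ), ∃ i j k : ℤ,
    g = w * ((x ^ 2) ^ i * (y ^ 2) ^ j * ((x * y) ^ 2) ^ k) := by
  obtain ⟨w, hw, hwg⟩ := exists_inv_mul_mem_translations g
  obtain ⟨i, j, k, hijk⟩ := mem_translations_iff.mp hwg
  exact ⟨w, hw, i, j, k, by rw [hijk, mul_inv_cancel_left]⟩

def screwX : Equiv.Perm (ℚ × ℚ × ℚ) where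
  toFun v := (v.1 + 1 / 2, -v.2.1 + 1 / 2, -v.2.2)
  invFun v := (v.1 - 1 / 2, -v.2.1 + 1 / 2, -v.2.2)
  left_inv v := by simp
  right_inv v := by simp

def screwY : Equiv.Perm (ℚ × ℚ × ℚ) where
  toFun v := (-v.1, v.2.1 + 1 / 2, -v.2.2 + 1 / 2)
  invFun v := (-v.1, v.2.1 - 1 / 2, -v.2.2 + 1 / 2)
  left_inv v := by simp
  right_inv v := by simp

def rep : Δ →* Equiv.Perm (ℚ × ℚ × ℚ) :=
  PresentedGroup.toGroup (f := ![screwX, screwY]) <| by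
    rintro r (rfl | rfl) <;> ext v <;>
      simp [screwX, screwY, sq, Equiv.Perm.mul_apply, Equiv.Perm.inv_def, Equiv.symm]

theorem rep_x : rep x = screwX := PresentedGroup.toGroup.of _

theorem rep_y : rep y = screwY := PresentedGroup.toGroup.of _

theorem rep_zpow (i j k : ℤ) :
    rep ((x ^ 2) ^ i * (y ^ 2) ^ j * ((x * y) ^ 2) ^ k) =
      Equiv.addLeft ((i : ℚ), (j : ℚ), -(k : ℚ)) := by
  have hx : rep (x ^ 2) = Equiv.addLeft (1, 0, 0) := by
    rw [map_pow, rep_x]; ext v <;> simp [screwX, sq]; ring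
  have hy : rep (y ^ 2) = Equiv.addLeft (0, 1, 0) := by
    rw [map_pow, rep_y]; ext v <;> simp [screwY, sq]; ring
  have hxy : rep ((x * y) ^ 2) = Equiv.addLeft (0, 0, -1) := by
    rw [map_pow, map_mul, rep_x, rep_y]; ext v <;> simp [screwX, screwY, sq]; ring
  simp only [map_mul, map_zpow, hx, hy, hxy, Equiv.zsmul_addLeft, ← Equiv.addLeft_add]
  congr 1
  simp

theorem exists_rep_sq_eq_addLeft {g : Δ} (hg : g ≠ 1) :
    ∃ t ≠ 0, rep (g ^ 2) = Equiv.addLeft t := by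
  obtain ⟨w, hw, i, j, k, rfl⟩ := exists_eq_mul_zpow g
  have odd_ne_zero : ∀ n : ℤ, (2 * n + 1 : ℚ) ≠ 0 := fun n => by
    exact_mod_cast (by omega : 2 * n + 1 ≠ 0)
  rcases hw with rfl | rfl | rfl | rfl
  · rw [one_mul] at hg ⊢
    refine ⟨((2 * i : ℚ), (2 * j : ℚ), -(2 * k : ℚ)), ?_, ?_⟩
    · contrapose! hg
      obtain ⟨rfl, rfl, rfl⟩ : i = 0 ∧ j = 0 ∧ k = 0 := by simpa [Prod.ext_iff] using hg
      simp
    · rw [map_pow, rep_zpow]; ext v <;> simp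
  · refine ⟨((2 * i + 1 : ℚ), 0, 0), by simp [odd_ne_zero], ?_⟩
    rw [map_pow, map_mul, rep_x, rep_zpow]; ext v <;> simp [screwX, sq] <;> ring
  · refine ⟨(0, (2 * j + 1 : ℚ), 0), by simp [odd_ne_zero], ?_⟩
    rw [map_pow, map_mul, rep_y, rep_zpow]; ext v <;> simp [screwY, sq] <;> ring
  · refine ⟨(0, 0, -(2 * k + 1 : ℚ)), by simpa [-neg_add_rev] using odd_ne_zero k, ?_⟩
    rw [map_pow, map_mul, map_mul, rep_x, rep_y, rep_zpow]
    ext v <;> simp [screwX, screwY, sq] <;> ring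

end DeltaP

/-- The Promislow group `Δ_P` is torsion-free. -/
theorem stmt8 : Monoid.IsTorsionFree (PresentedGroup deltaPRels) := by
  intro g hg hfin
  obtain ⟨t, ht, hsq⟩ := DeltaP.exists_rep_sq_eq_addLeft hg
  exact Equiv.not_isOfFinOrder_addLeft ht (hsq ▸ DeltaP.rep.isOfFinOrder hfin.pow)
end

section
/- Let $\Gamma$ be a torsion-free group and $N \trianglelefteq \Gamma$ a normal subgroup. If $N$ and $\Gamma/N$ are both diffuse, then $\Gamma$ is diffuse. -/
/-- The set of extremal points of a subset `A` of a group: `a ∈ A` is extremal if for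
every `g ≠ 1`, either `g a ∉ A` or `g⁻¹ a ∉ A`. -/
def ExtremalPoints {G : Type*} [Group G] (A : Set G) : Set G :=
  {a ∈ A | ∀ g : G, g ≠ 1 → g * a ∉ A ∨ g⁻¹ * a ∉ A}

/-- A group is diffuse if every finite subset with at least two elements has at least
two extremal points. -/
def IsDiffuse (G : Type*) [Group G] : Prop :=
  ∀ A : Set G, A.Finite → 2 ≤ Nat.card A → 2 ≤ Nat.card (ExtremalPoints A)

/-!
Write `π : Γ → Γ/N`. Given a finite `A ⊆ Γ` and `a ∈ A`, the part of `A` in the coset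
`N a` is `cosetSlice N A a = A a⁻¹ ∩ N`. If `π a` is extremal in `π(A)` and `b` is extremal
in the slice, then `b a` is extremal in `A`: a translation by `g ∉ N` leaves `A` by
extremality of `π a`, one by `g ∈ N` by extremality of `b`. If `π(A)` has two points, its two
extremal points lift to two extremal points of `A`; otherwise `A = (cosetSlice N A a) a` and
two extremal points of the slice do.
-/

section ExtremalPoints

variable {G : Type*} [Group G]

lemma extremalPoints_subset (A : Set G) : ExtremalPoints A ⊆ A := fun _ ha => ha.1

lemma extremalPoints_singleton (a : G) : ExtremalPoints ({a} : Set G) = {a} := by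
  refine (extremalPoints_subset _).antisymm ?_
  rintro _ rfl
  exact ⟨rfl, fun g hg => Or.inl fun h => hg (mul_eq_right.mp h)⟩

lemma isDiffuse_iff :
    IsDiffuse G ↔ ∀ A : Set G, A.Finite → A.Nontrivial → (ExtremalPoints A).Nontrivial := by
  have key : ∀ s : Set G, s.Finite → (2 ≤ Nat.card s ↔ s.Nontrivial) := fun s hs => by
    have := hs.to_subtype
    rw [← Set.nontrivial_coe_sort, ← Finite.one_lt_card_iff_nontrivial]
    rfl
  refine forall_congr' fun A => imp_congr_right fun hA => ?_
  rw [key A hA, key _ (hA.subset (extremalPoints_subset A))]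

lemma IsDiffuse.extremalPoints_nonempty (hG : IsDiffuse G) {A : Set G} (hA : A.Finite)
    (hne : A.Nonempty) : (ExtremalPoints A).Nonempty := by
  obtain ⟨a, rfl⟩ | hnt := hne.exists_eq_singleton_or_nontrivial
  · simp [extremalPoints_singleton]
  · exact (isDiffuse_iff.mp hG A hA hnt).nonempty

end ExtremalPoints

section Extension

variable {Γ : Type*} [Group Γ] (N : Subgroup Γ)

def cosetSlice (A : Set Γ) (a : Γ) : Set N := {n : N | (n : Γ) * a ∈ A}

variable {N}

lemma cosetSlice_finite {A : Set Γ} (hA : A.Finite) (a : Γ) : (cosetSlice N A a).Finite :=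
  hA.preimage fun _ _ _ _ h => Subtype.ext (mul_right_cancel h)

lemma one_mem_cosetSlice {A : Set Γ} {a : Γ} (ha : a ∈ A) : 1 ∈ cosetSlice N A a := by
  simpa [cosetSlice] using ha

variable [N.Normal]

lemma mk_coe_mul (b : N) (a : Γ) : (((b : Γ) * a : Γ) : Γ ⧸ N) = a := by
  rw [QuotientGroup.mk_mul, (QuotientGroup.eq_one_iff _).mpr b.2, one_mul]

lemma mul_mem_extremalPoints {A : Set Γ} {a : Γ}
    (hx : (a : Γ ⧸ N) ∈ ExtremalPoints (((↑) : Γ → Γ ⧸ N) '' A)) {b : N}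
    (hb : b ∈ ExtremalPoints (cosetSlice N A a)) : (b : Γ) * a ∈ ExtremalPoints A := by
  refine ⟨hb.1, fun g hg => ?_⟩
  by_cases hgN : g ∈ N
  · have hg' : (⟨g, hgN⟩ : N) ≠ 1 := fun h => hg (congrArg Subtype.val h)
    simpa only [cosetSlice, Set.mem_ofPred_eq, Subgroup.coe_mul, Subgroup.coe_inv, mul_assoc]
      using hb.2 ⟨g, hgN⟩ hg'
  · have hgq : (g : Γ ⧸ N) ≠ 1 := mt (QuotientGroup.eq_one_iff g).mp hgN
    refine (hx.2 g hgq).imp (fun h hmem => h ?_) (fun h hmem => h ?_)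
    · exact ⟨_, hmem, by rw [QuotientGroup.mk_mul, mk_coe_mul]⟩
    · exact ⟨_, hmem, by rw [QuotientGroup.mk_mul, mk_coe_mul, QuotientGroup.mk_inv]⟩

lemma exists_mem_extremalPoints_mk_eq (hN : IsDiffuse N) {A : Set Γ} (hA : A.Finite)
    {x : Γ ⧸ N} (hx : x ∈ ExtremalPoints (((↑) : Γ → Γ ⧸ N) '' A)) :
    ∃ c ∈ ExtremalPoints A, (c : Γ ⧸ N) = x := by
  obtain ⟨a, ha, rfl⟩ := hx.1
  obtain ⟨b, hb⟩ :=
    hN.extremalPoints_nonempty (cosetSlice_finite hA a) ⟨1, one_mem_cosetSlice ha⟩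
  exact ⟨_, mul_mem_extremalPoints hx hb, mk_coe_mul b a⟩

lemma cosetSlice_nontrivial {A : Set Γ} (hA : A.Nontrivial) {a : Γ}
    (hsing : ((↑) : Γ → Γ ⧸ N) '' A = {(a : Γ ⧸ N)}) :
    (cosetSlice N A a).Nontrivial := by
  have hmem : ∀ c ∈ A, c * a⁻¹ ∈ N := fun c hc => by
    have hca : (c : Γ ⧸ N) = a := hsing.subset ⟨c, hc, rfl⟩
    exact ‹N.Normal›.mem_comm (QuotientGroup.eq.mp hca.symm)
  obtain ⟨c₁, hc₁, c₂, hc₂, hne⟩ := hA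
  refine ⟨⟨_, hmem c₁ hc₁⟩, ?_, ⟨_, hmem c₂ hc₂⟩, ?_, fun h => hne ?_⟩
  · simpa [cosetSlice] using hc₁
  · simpa [cosetSlice] using hc₂
  · simpa using congrArg Subtype.val h

end Extension

theorem stmt11_general (Γ : Type*) [Group Γ]
    (N : Subgroup Γ) [N.Normal]
    (h1 : IsDiffuse N) (h2 : IsDiffuse (Γ ⧸ N)) : IsDiffuse Γ := by
  rw [isDiffuse_iff]
  intro A hA hnt
  obtain ⟨_, hsing⟩ | hnt' :=
    (hnt.nonempty.image ((↑) : Γ → Γ ⧸ N)).exists_eq_singleton_or_nontrivial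
  · obtain ⟨a, ha⟩ := hnt.nonempty
    obtain rfl : _ = (a : Γ ⧸ N) := (hsing.subset ⟨a, ha, rfl⟩).symm
    have hx : (a : Γ ⧸ N) ∈ ExtremalPoints (((↑) : Γ → Γ ⧸ N) '' A) := by
      simp [hsing, extremalPoints_singleton]
    obtain ⟨b₁, hb₁, b₂, hb₂, hne⟩ :=
      isDiffuse_iff.mp h1 _ (cosetSlice_finite hA a) (cosetSlice_nontrivial hnt hsing)
    exact ⟨_, mul_mem_extremalPoints hx hb₁, _, mul_mem_extremalPoints hx hb₂,
      fun h => hne (Subtype.ext (mul_right_cancel h))⟩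
  · obtain ⟨_, hx₁, _, hx₂, hne⟩ := isDiffuse_iff.mp h2 _ (hA.image _) hnt'
    obtain ⟨c₁, hc₁, rfl⟩ := exists_mem_extremalPoints_mk_eq h1 hA hx₁
    obtain ⟨c₂, hc₂, rfl⟩ := exists_mem_extremalPoints_mk_eq h1 hA hx₂
    exact ⟨c₁, hc₁, c₂, hc₂, fun h => hne (congrArg _ h)⟩

/-- If `Γ` is torsion-free, `N ⊴ Γ`, and both `N` and `Γ/N` are diffuse,
then `Γ` is diffuse. -/
theorem stmt11 (Γ : Type*) [Group Γ] (htf : Monoid.IsTorsionFree Γ)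
    (N : Subgroup Γ) [N.Normal]
    (h1 : IsDiffuse N) (h2 : IsDiffuse (Γ ⧸ N)) : IsDiffuse Γ :=
  stmt11_general Γ N h1 h2
end

section
/- Let $G = C_2^k$ act diagonally on $\mathbb{Z}^n$, meaning there is a basis $e_1, \ldots, e_n$ with $g \cdot e_i = \pm e_i$ for all $g, i$. Suppose the fixed submodule $(\mathbb{Z}^n)^G$ is zero, and suppose for each index-2 subgroup $A \leq G$ the fixed submodule $(\mathbb{Z}^n)^A$ is nonzero. Then $n \geq 2^k - 1$. -/
/-!
Each index-2 subgroup `A` fixes a nonzero vector, hence (the action being diagonal) some basis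
vector `e_j`, i.e. `A ≤ ker ρ_j`. Distinct index-2 subgroups are maximal, so they generate `G`,
and a common `j` would give `ker ρ_j = G`, making `e_j` a nonzero `G`-fixed vector. Thus
`A ↦ j` is injective, and `C₂ᵏ` has `2ᵏ - 1` index-2 subgroups: the kernels of its nonzero
characters `g ↦ ∑ wᵢ gᵢ`, which are determined by their kernels.
-/

theorem Subgroup.isCoatom_of_index_eq_two {G : Type*} [Group G] {H : Subgroup G}
    (h : H.index = 2) : IsCoatom H := by
  have : H.FiniteIndex := ⟨by omega⟩
  refine ⟨fun hH => by simp [hH] at h, fun K hK => ?_⟩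
  have hlt := index_strictAnti hK
  have hne := (finiteIndex_of_le hK.le).index_ne_zero
  exact index_eq_one.mp (by omega)

theorem Subgroup.nonempty_indexTwo_embedding {G ι : Type*} [Group G] {K : ι → Subgroup G}
    (hK : ∀ j, K j ≠ ⊤) (hcover : ∀ A : Subgroup G, A.index = 2 → ∃ j, A ≤ K j) :
    Nonempty ({A : Subgroup G // A.index = 2} ↪ ι) := by
  choose j hj using hcover
  refine ⟨⟨fun A => j A A.2, ?_⟩⟩
  rintro ⟨A, hA⟩ ⟨B, hB⟩ (hAB : j A hA = j B hB)
  by_contra hne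
  have hsup : A ⊔ B = ⊤ := (isCoatom_of_index_eq_two hA).sup_eq_top_of_ne
    (isCoatom_of_index_eq_two hB) (Subtype.coe_ne_coe.mpr hne)
  exact hK (j A hA) (top_le_iff.mp (hsup ▸ sup_le (hj A hA) (hAB ▸ hj B hB)))

namespace MonoidHom

variable {G : Type*} [Group G]

theorem index_ker_eq_two {f : G →* Multiplicative (ZMod 2)} (hf : f ≠ 1) : f.ker.index = 2 := by
  have : Fact (Nat.card (Multiplicative (ZMod 2))).Prime := ⟨by simp [Nat.prime_two]⟩
  have hrange : f.range = ⊤ :=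
    f.range.eq_bot_or_eq_top_of_prime_card.resolve_left (range_eq_bot_iff.not.mpr hf)
  rw [Subgroup.index_ker, hrange, Subgroup.card_top]
  simp

theorem eq_of_ker_eq {f g : G →* Multiplicative (ZMod 2)} (h : f.ker = g.ker) : f = g := by
  have two : ∀ y : Multiplicative (ZMod 2), y ≠ 1 → y = Multiplicative.ofAdd 1 := by decide
  have hiff : ∀ x, f x = 1 ↔ g x = 1 := fun x => by simp only [← mem_ker, h]
  refine DFunLike.ext _ _ fun x => ?_
  by_cases hx : f x = 1
  · rw [hx, (hiff x).mp hx]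
  · rw [two _ hx, two _ (mt (hiff x).mpr hx)]

def kerEmbedding :
    {f : G →* Multiplicative (ZMod 2) // f ≠ 1} ↪ {A : Subgroup G // A.index = 2} where
  toFun f := ⟨f.1.ker, index_ker_eq_two f.2⟩
  inj' _ _ h := Subtype.ext (eq_of_ker_eq (congrArg Subtype.val h))

end MonoidHom

noncomputable def characterOfVector {ι : Type*} [Finite ι] :
    (ι → ZMod 2) ↪ (Multiplicative (ι → ZMod 2) →* Multiplicative (ZMod 2)) where
  toFun w := AddMonoidHom.toMultiplicative (Module.piEquiv ι (ZMod 2) (ZMod 2) w).toAddMonoidHom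
  inj' := AddMonoidHom.toMultiplicative.injective.comp
    (LinearMap.toAddMonoidHom_injective.comp (Module.piEquiv ι (ZMod 2) (ZMod 2)).injective)

theorem characterOfVector_zero {ι : Type*} [Finite ι] :
    characterOfVector (0 : ι → ZMod 2) = 1 := by
  ext x
  simp [characterOfVector]

theorem characterOfVector_ne_one {ι : Type*} [Finite ι] {w : ι → ZMod 2} (hw : w ≠ 0) :
    characterOfVector w ≠ 1 := fun h =>
  hw (characterOfVector.injective (h.trans characterOfVector_zero.symm))

section DiagonalAction

variable {G ι : Type*} [Group G] (ρ : ι → G →* ℤˣ)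

theorem exists_le_ker_of_ne_zero_of_fixed {A : Subgroup G} {v : ι → ℤ} (hv : v ≠ 0)
    (hfix : ∀ g ∈ A, (fun i => (ρ i g : ℤ) * v i) = v) : ∃ j, A ≤ (ρ j).ker := by
  obtain ⟨j, hj⟩ := Function.ne_iff.mp hv
  refine ⟨j, fun g hg => Units.ext (mul_right_cancel₀ hj ?_)⟩
  simpa using congrFun (hfix g hg) j

theorem ker_ne_top_of_fixed_eq_zero
    (hfix : ∀ v : ι → ℤ, (∀ g, (fun i => (ρ i g : ℤ) * v i) = v) → v = 0) (j : ι) :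
    (ρ j).ker ≠ ⊤ := by
  classical
  intro htop
  have hρj : ∀ g, ρ j g = 1 := fun g => (MonoidHom.mem_ker).mp (htop ▸ Subgroup.mem_top g)
  have hsingle := hfix (Pi.single j 1) fun g => by
    funext i
    by_cases hij : i = j
    · subst hij; simp [hρj g]
    · simp [Pi.single_eq_of_ne hij]
  simpa using congrFun hsingle j

end DiagonalAction

/-- Let `C₂ᵏ` act diagonally on `ℤⁿ` via characters `ρᵢ`.  If the fixed
submodule of the whole group is zero but every index-2 subgroup has a nonzero fixed
vector, then `n ≥ 2ᵏ - 1`. -/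
theorem stmt15 (k n : ℕ) (ρ : Fin n → (Multiplicative (Fin k → ZMod 2) →* ℤˣ))
    (hfix : ∀ v : Fin n → ℤ,
      (∀ g, (fun i => (ρ i g : ℤ) * v i) = v) → v = 0)
    (hA : ∀ A : Subgroup (Multiplicative (Fin k → ZMod 2)), A.index = 2 →
      ∃ v : Fin n → ℤ, v ≠ 0 ∧ ∀ g ∈ A, (fun i => (ρ i g : ℤ) * v i) = v) :
    2 ^ k - 1 ≤ n := by
  obtain ⟨toIndex⟩ := Subgroup.nonempty_indexTwo_embedding (ker_ne_top_of_fixed_eq_zero ρ hfix)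
    fun A hA2 => by
      obtain ⟨v, hv, hvA⟩ := hA A hA2
      exact exists_le_ker_of_ne_zero_of_fixed ρ hv hvA
  have hcard := Fintype.card_le_of_embedding <|
    ((characterOfVector.subtypeMap fun _ => characterOfVector_ne_one).trans
      MonoidHom.kerEmbedding).trans toIndex
  simpa [Fintype.card_subtype_compl] using hcard
end
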